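/- arXiv:1403.4324 — 2 statements merged into one kernel-verified Lean document; each statement's English description precedes it below -/
import Mathlib

section
/- Let (E,w) be a singly connected weighted Bratteli diagram and let Λ = Λ_E be the associated rank-3 Bratteli diagram. Let F be the Bratteli diagram with F^0 = E^0 and F^1 = ⨆_{e ∈ E^1} {e} × ℤ/(w(s(e))/w(r(e)))ℤ, with r(e,i) = r(e) and s(e,i) = s(e). Then for each graph trace h on F there is a graph trace g_h on Λ with g_h(ι_v(v,j)) = h(v) for all v ∈ F^0 and j ∈ ℤ/w(v)ℤ, and the map h ↦ g_h is a bijection between graph traces on F and graph traces on Λ. -/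
open scoped BigOperators NNReal ENNReal

/-- A `k`-graph: a countable small category presented on its set of morphisms,
with a range map, a source map, a (total, junk-valued on non-composable pairs)
composition, and a degree functor into `ℕ^k` satisfying the factorisation
property. -/
structure KGraph (k : ℕ) where
  M : Type
  countableM : Countable M
  nonemptyM : Nonempty M
  src : M → M
  rng : M → M
  comp : M → M → M
  deg : M → Fin k → ℕ
  src_src : ∀ x, src (src x) = src x
  rng_src : ∀ x, rng (src x) = src x
  src_rng : ∀ x, src (rng x) = rng x
  rng_rng : ∀ x, rng (rng x) = rng x
  comp_id : ∀ x, comp x (src x) = x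
  id_comp : ∀ x, comp (rng x) x = x
  src_comp : ∀ x y, src x = rng y → src (comp x y) = src y
  rng_comp : ∀ x y, src x = rng y → rng (comp x y) = rng x
  comp_assoc : ∀ x y z, src x = rng y → src y = rng z →
    comp (comp x y) z = comp x (comp y z)
  deg_src : ∀ x, deg (src x) = 0
  deg_rng : ∀ x, deg (rng x) = 0
  deg_comp : ∀ x y, src x = rng y → deg (comp x y) = deg x + deg y
  factor : ∀ (x : M) (m n : Fin k → ℕ), deg x = m + n →
    ∃! p : M × M, src p.1 = rng p.2 ∧ comp p.1 p.2 = x ∧ deg p.1 = m ∧ deg p.2 = n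

namespace KGraph

variable {k : ℕ} (Λ : KGraph k)

/-- The vertices (identity morphisms) of a `k`-graph. -/
def IsVertex (v : Λ.M) : Prop := Λ.rng v = v

/-- `Composable x y` means the composition `x ∘ y` (i.e. the path `xy`) is defined. -/
def Composable (x y : Λ.M) : Prop := Λ.src x = Λ.rng y

/-- The type of vertices of `Λ`. -/
def Vtx := {v : Λ.M // Λ.IsVertex v}

theorem isVertex_src (x : Λ.M) : Λ.IsVertex (Λ.src x) := Λ.rng_src x

theorem isVertex_rng (x : Λ.M) : Λ.IsVertex (Λ.rng x) := Λ.rng_rng x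

/-- The source of a morphism, as a vertex. -/
def srcV (x : Λ.M) : Λ.Vtx := ⟨Λ.src x, Λ.isVertex_src x⟩

/-- The set `vΛ^{≤ n}`. -/
def leSet (v : Λ.M) (n : Fin k → ℕ) : Set Λ.M :=
  {x | Λ.rng x = v ∧ Λ.deg x ≤ n ∧
    ∀ i : Fin k, Λ.deg x + Pi.single i 1 ≤ n →
      ¬∃ y, Λ.rng y = Λ.src x ∧ Λ.deg y = Pi.single i 1}

/-- A `k`-graph is row-finite if `vΛ^n` is finite for every vertex `v` and `n ∈ ℕ^k`. -/
def RowFinite : Prop :=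
  ∀ (v : Λ.M) (n : Fin k → ℕ), Λ.IsVertex v → {x | Λ.rng x = v ∧ Λ.deg x = n}.Finite

/-- A `k`-graph is locally convex if whenever `i < j`, `e ∈ Λ^{e_i}`, `f ∈ Λ^{e_j}` and
`r e = r f`, both `e` and `f` extend to paths of degree `e_i + e_j`. -/
def LocallyConvex : Prop :=
  ∀ (i j : Fin k), i < j → ∀ e f : Λ.M,
    Λ.deg e = Pi.single i 1 → Λ.deg f = Pi.single j 1 → Λ.rng e = Λ.rng f →
    (∃ e', Λ.Composable e e' ∧ Λ.deg e' = Pi.single j 1) ∧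
    (∃ f', Λ.Composable f f' ∧ Λ.deg f' = Pi.single i 1)

/-- `Λ^{min}(x,y)`: the pairs `(α, β)` with `xα = yβ` of degree `d x ⊔ d y`. -/
def MinExt (x y : Λ.M) : Set (Λ.M × Λ.M) :=
  {p | Λ.Composable x p.1 ∧ Λ.Composable y p.2 ∧
    Λ.comp x p.1 = Λ.comp y p.2 ∧ Λ.deg (Λ.comp x p.1) = Λ.deg x ⊔ Λ.deg y}

/-- A subset `E ⊆ vΛ` is exhaustive if every `x ∈ vΛ` has a minimal common extension
with some element of `E`. -/
def Exhaustive (v : Λ.M) (E : Set Λ.M) : Prop :=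
  ∀ x, Λ.rng x = v → ∃ μ ∈ E, (Λ.MinExt x μ).Nonempty

/-- A graph trace on `Λ`. -/
def IsGraphTrace (g : Λ.Vtx → ℝ≥0) : Prop :=
  ∀ (v : Λ.Vtx) (n : Fin k → ℕ), g v = ∑ᶠ x ∈ Λ.leSet v.1 n, g (Λ.srcV x)

/-- A `𝕋`-valued `2`-cocycle on `Λ`, presented as a `ℂ`-valued function that is
unimodular on composable pairs. -/
def IsTCocycle (c : Λ.M → Λ.M → ℂ) : Prop :=
  (∀ x y, Λ.Composable x y → ‖c x y‖ = 1) ∧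
  (∀ x y, Λ.IsVertex x ∨ Λ.IsVertex y → c x y = 1) ∧
  (∀ x y z, Λ.Composable x y → Λ.Composable y z →
    c x y * c (Λ.comp x y) z = c y z * c x (Λ.comp y z))

/-- A Cuntz–Krieger `(Λ, c)`-family in a `C*`-algebra `B`: relations (CK1)–(CK4). -/
def IsCKFamily {B : Type*} [NonUnitalCStarAlgebra B] [NormedSpace ℂ B]
    (c : Λ.M → Λ.M → ℂ) (s : Λ.M → B) : Prop :=
  (∀ v, Λ.IsVertex v → star (s v) = s v ∧ s v * s v = s v) ∧
  (∀ v w, Λ.IsVertex v → Λ.IsVertex w → v ≠ w → s v * s w = 0) ∧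
  (∀ x y, Λ.Composable x y → s x * s y = c x y • s (Λ.comp x y)) ∧
  (∀ x, star (s x) * s x = s (Λ.src x)) ∧
  (∀ (v : Λ.M) (n : Fin k → ℕ), Λ.IsVertex v →
    s v = ∑ᶠ x ∈ Λ.leSet v n, s x * star (s x))

end KGraph
/-- The `2`-graph `Δ(n) = T₂ ×₁ ℤ/nℤ`: morphisms are pairs `((s,t), i)` with degree
`(s,t)`, range `i`, source `i + s + t`, and composition
`((s,t), i)((s',t'), i+s+t) = ((s+s',t+t'), i)`. -/
def Delta (n : ℕ) : KGraph 2 where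
  M := (ℕ × ℕ) × ZMod n
  countableM := by
    cases n with
    | zero => exact inferInstanceAs (Countable ((ℕ × ℕ) × ℤ))
    | succ m => exact inferInstanceAs (Countable ((ℕ × ℕ) × Fin (m + 1)))
  nonemptyM := by infer_instance
  src x := ((0, 0), x.2 + x.1.1 + x.1.2)
  rng x := ((0, 0), x.2)
  comp x y := ((x.1.1 + y.1.1, x.1.2 + y.1.2), x.2)
  deg x := ![x.1.1, x.1.2]
  src_src x := by simp
  rng_src x := by simp
  src_rng x := by simp
  rng_rng x := by simp
  comp_id x := by simp
  id_comp x := by simp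
  src_comp x y h := by
    have h2 : x.2 + (x.1.1 : ZMod n) + (x.1.2 : ZMod n) = y.2 :=
      congrArg Prod.snd h
    refine Prod.ext rfl ?_
    push_cast
    rw [← h2]
    ring
  rng_comp x y h := rfl
  comp_assoc x y z h1 h2 := by
    refine Prod.ext (Prod.ext ?_ ?_) rfl <;> simp [Nat.add_assoc]
  deg_src x := by
    funext i
    fin_cases i <;> rfl
  deg_rng x := by
    funext i
    fin_cases i <;> rfl
  deg_comp x y h := by
    funext i
    fin_cases i <;> simp
  factor x m m' h := by
    refine ⟨(((m 0, m 1), x.2), ((m' 0, m' 1), x.2 + m 0 + m 1)), ⟨rfl, ?_, ?_, ?_⟩, ?_⟩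
    · have h0 : x.1.1 = m 0 + m' 0 := by
        have := congrFun h 0; simpa using this
      have h1 : x.1.2 = m 1 + m' 1 := by
        have := congrFun h 1; simpa using this
      refine Prod.ext (Prod.ext ?_ ?_) rfl <;> simp [h0, h1]
    · funext i; fin_cases i <;> rfl
    · funext i; fin_cases i <;> rfl
    · rintro ⟨a, b⟩ ⟨hcomp, heq, hda, hdb⟩
      have ha0 : a.1.1 = m 0 := by
        have := congrFun hda 0; simpa using this
      have ha1 : a.1.2 = m 1 := by
        have := congrFun hda 1; simpa using this
      have hb0 : b.1.1 = m' 0 := by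
        have := congrFun hdb 0; simpa using this
      have hb1 : b.1.2 = m' 1 := by
        have := congrFun hdb 1; simpa using this
      have ha2 : a.2 = x.2 := congrArg (fun z => z.2) heq
      have hb2 : b.2 = x.2 + (m 0 : ZMod n) + (m 1 : ZMod n) := by
        have := congrArg Prod.snd hcomp
        simp only at this
        rw [← this, ha2, ha0, ha1]
      refine Prod.ext (Prod.ext (Prod.ext ha0 ha1) ha2) (Prod.ext (Prod.ext hb0 hb1) hb2)

/-- The `𝕋`-valued `2`-cocycle `d_* c_θ` on `Δ(n)` induced by the cocycle
`c_θ(m, m') = e^{2πiθ m₂ m'₁}` on `ℤ²`. -/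
noncomputable def deltaCocycle (n : ℕ) (θ : ℝ) : (Delta n).M → (Delta n).M → ℂ :=
  fun x y => Complex.exp (2 * Real.pi * Complex.I * θ * ((x.1.2 : ℂ) * (y.1.1 : ℂ)))
/-- A Bratteli diagram: a directed graph whose vertices are partitioned into finite
nonempty levels (level `n` here corresponds to `E_{n+1}^0` in the paper), each edge
pointing from a vertex at level `n+1` (its source) to one at level `n` (its range),
such that every vertex receives an edge and every vertex not at level `0` emits one. -/
structure BratteliDiagram where
  V : Type
  Edge : Type
  esrc : Edge → V
  erng : Edge → V
  level : V → ℕ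
  level_src : ∀ e, level (esrc e) = level (erng e) + 1
  level_finite : ∀ n, {v | level v = n}.Finite
  level_nonempty : ∀ n, ∃ v, level v = n
  rcv : ∀ v, ∃ e, erng e = v
  emit : ∀ v, level v ≠ 0 → ∃ e, esrc e = v

namespace BratteliDiagram

/-- A Bratteli diagram is singly connected if there is at most one edge between any
two vertices. -/
def SinglyConnected (E : BratteliDiagram) : Prop :=
  ∀ e f : E.Edge, E.erng e = E.erng f → E.esrc e = E.esrc f → e = f

/-- A graph trace on a Bratteli diagram. -/
def IsTrace (E : BratteliDiagram) (h : E.V → ℝ≥0) : Prop :=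
  ∀ v, h v = ∑ᶠ e ∈ {e | E.erng e = v}, h (E.esrc e)

/-- `HasPath E n v u`: there is a path of length `n` in `E` with range `v` and
source `u`. -/
def HasPath (E : BratteliDiagram) : ℕ → E.V → E.V → Prop
  | 0, v, u => v = u
  | n + 1, v, u => ∃ e, E.erng e = v ∧ HasPath E n (E.esrc e) u

/-- A Bratteli diagram is cofinal if for all `v, v'` there exists `n` such that the
source of every path of length `n` with range `v'` is connected to `v`. -/
def Cofinal (E : BratteliDiagram) : Prop :=
  ∀ v v' : E.V, ∃ n : ℕ, ∀ u : E.V, E.HasPath n v' u → ∃ m : ℕ, E.HasPath m v u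

end BratteliDiagram

open KGraph

/-- The `(k+1)`-graph `Λ_E` associated to a Bratteli diagram `E` of covering maps
`p_f : Λ_{s(f)} → Λ_{r(f)}` between `k`-graphs `(Λ_v)_{v ∈ E^0}`, together with its
defining data: injective functors `ι_v : Λ_v → Λ_E` and a bijection
`e : ⨆_{v ∉ E_1^0} Λ_v^0 × E^1 v → Λ_E^{e_{k+1}}` satisfying properties (1)–(5). -/
structure BCSLimit {k : ℕ} (E : BratteliDiagram) (Λv : E.V → KGraph k)
    (pe : ∀ f : E.Edge, (Λv (E.esrc f)).M → (Λv (E.erng f)).M) where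
  Lam : KGraph (k + 1)
  ι : ∀ v, (Λv v).M → Lam.M
  ι_inj : ∀ v, Function.Injective (ι v)
  ι_src : ∀ v x, Lam.src (ι v x) = ι v ((Λv v).src x)
  ι_rng : ∀ v x, Lam.rng (ι v x) = ι v ((Λv v).rng x)
  ι_comp : ∀ v x y, (Λv v).Composable x y →
    Lam.comp (ι v x) (ι v y) = ι v ((Λv v).comp x y)
  ι_deg : ∀ v x, Lam.deg (ι v x) = Fin.snoc ((Λv v).deg x) 0
  ι_disjoint : ∀ v u x y, ι v x = ι u y → v = u
  ι_union : ∀ z : Lam.M, Lam.deg z (Fin.last k) = 0 → ∃ v x, ι v x = z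
  edge : (Σ f : E.Edge, (Λv (E.esrc f)).M) → Lam.M
  edge_deg : ∀ q : Σ f : E.Edge, (Λv (E.esrc f)).M, (Λv (E.esrc q.1)).IsVertex q.2 →
    Lam.deg (edge q) = Fin.snoc (fun _ : Fin k => 0) 1
  edge_injOn : Set.InjOn edge {q | (Λv (E.esrc q.1)).IsVertex q.2}
  edge_surj : ∀ z : Lam.M, Lam.deg z = Fin.snoc (fun _ : Fin k => 0) 1 →
    ∃ q, (Λv (E.esrc q.1)).IsVertex q.2 ∧ edge q = z
  edge_src : ∀ (f : E.Edge) (x : (Λv (E.esrc f)).M), (Λv (E.esrc f)).IsVertex x →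
    Lam.src (edge ⟨f, x⟩) = ι (E.esrc f) x
  edge_rng : ∀ (f : E.Edge) (x : (Λv (E.esrc f)).M), (Λv (E.esrc f)).IsVertex x →
    Lam.rng (edge ⟨f, x⟩) = ι (E.erng f) (pe f x)
  edge_comm : ∀ (f : E.Edge) (x : (Λv (E.esrc f)).M),
    Lam.comp (edge ⟨f, (Λv (E.esrc f)).rng x⟩) (ι (E.esrc f) x) =
      Lam.comp (ι (E.erng f) (pe f x)) (edge ⟨f, (Λv (E.esrc f)).src x⟩)
/-- The Bratteli diagram `F` associated to a weighted Bratteli diagram `(E, w)`: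
`F⁰ = E⁰` and `F¹ = ⨆_{e ∈ E¹} {e} × ℤ/(w(s(e))/w(r(e)))ℤ`, with ranges and sources
inherited from `E`. -/
def Fdiag (E : BratteliDiagram) (w : E.V → ℕ) : BratteliDiagram where
  V := E.V
  Edge := Σ f : E.Edge, ZMod (w (E.esrc f) / w (E.erng f))
  esrc q := E.esrc q.1
  erng q := E.erng q.1
  level := E.level
  level_src q := E.level_src q.1
  level_finite := E.level_finite
  level_nonempty := E.level_nonempty
  rcv v := by
    obtain ⟨e, he⟩ := E.rcv v
    exact ⟨⟨e, 0⟩, he⟩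
  emit v h := by
    obtain ⟨e, he⟩ := E.emit v h
    exact ⟨⟨e, 0⟩, he⟩


/-!
Every vertex of `Λ_E` is some `ι_v(v, j)`, and `Λ_E` has no sources and is row-finite, so a
function `g` on its vertices is a graph trace as soon as the trace identity holds in the three
degrees `e₁, e₂, e₃` (the identities for `m` and `m'` give the one for `m + m'` by the
factorisation property). In degree `e₁` the only path from `ι_v(v, j)` is an edge of `Λ_v`
with source `ι_v(v, j + 1)`, so a graph trace is constant on each copy of `Δ(w v)`, i.e. of the
form `h ∘ level`. In degree `e₃` the edges with range `ι_v(v, j)` lying over `f ∈ vE¹` are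
indexed by the `w(s f)/w(v)` preimages of `j` under `ℤ/w(s f) → ℤ/w(v)`, that is by the edges
of `F` over `f`; hence the `e₃`-identity for `h ∘ level` is exactly the trace identity of `h`
on `F`, and `h ↦ h ∘ level` is the required bijection.
-/

theorem ZMod.bijOn_castHom_fiber {m n : ℕ} [NeZero n] (hd : m ∣ n) (j : ZMod m) :
    Set.BijOn (fun t : ZMod (n / m) => ((j.val + m * t.val : ℕ) : ZMod n)) Set.univ
      {i | ZMod.castHom hd (ZMod m) i = j} := by
  have hn : 0 < n := Nat.pos_of_neZero n
  have hm : 0 < m := Nat.pos_of_dvd_of_pos hd hn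
  have : NeZero m := ⟨hm.ne'⟩
  have : NeZero (n / m) := ⟨(Nat.div_pos (Nat.le_of_dvd hn hd) hm).ne'⟩
  have hlt : ∀ t : ZMod (n / m), j.val + m * t.val < n := by
    intro t
    nlinarith [ZMod.val_lt j, ZMod.val_lt t, Nat.mul_div_cancel' hd]
  refine ⟨fun t _ => ?_, fun t _ t' _ htt' => ?_, fun i hi => ?_⟩
  · show ZMod.castHom hd (ZMod m) ((_ : ℕ) : ZMod n) = j
    rw [map_natCast, Nat.cast_add, Nat.cast_mul, ZMod.natCast_self, zero_mul, add_zero,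
      ZMod.natCast_zmod_val]
  · have := congrArg ZMod.val htt'
    simp only [ZMod.val_natCast_of_lt (hlt t), ZMod.val_natCast_of_lt (hlt t')] at this
    exact ZMod.val_injective _ (Nat.eq_of_mul_eq_mul_left hm (by omega))
  · have hj : i.val % m = j.val := by
      rw [← hi, ← ZMod.val_natCast, ← map_natCast (ZMod.castHom hd (ZMod m)),
        ZMod.natCast_zmod_val]
    have hval : ((i.val / m : ℕ) : ZMod (n / m)).val = i.val / m :=
      ZMod.val_natCast_of_lt (Nat.div_lt_div_of_lt_of_dvd hd (ZMod.val_lt i))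
    refine ⟨(i.val / m : ℕ), trivial, ?_⟩
    simp only [hval, ← hj, Nat.mod_add_div, ZMod.natCast_zmod_val]

theorem Pi.induction_on_single_one {ι : Type*} [Finite ι] [DecidableEq ι] {p : (ι → ℕ) → Prop}
    (zero : p 0) (add : ∀ f g, p f → p g → p (f + g)) (single : ∀ i, p (Pi.single i 1))
    (f : ι → ℕ) : p f :=
  Pi.single_induction p f zero add fun i m => by
    induction m with
    | zero => rwa [Pi.single_zero]
    | succ m ih =>
      rw [Pi.single_add]
      exact add _ _ ih (single i)

namespace KGraph

variable {k : ℕ} (Λ : KGraph k)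

/-- `vΛ^n`. -/
def paths (v : Λ.M) (n : Fin k → ℕ) : Set Λ.M :=
  {x | Λ.rng x = v ∧ Λ.deg x = n}

/-- The graph-trace identity in the single degree `n`, with `vΛ^n` in place of `vΛ^{≤n}`. -/
def IsTraceAt (g : Λ.Vtx → ℝ≥0) (n : Fin k → ℕ) : Prop :=
  ∀ v : Λ.Vtx, g v = ∑ᶠ x ∈ Λ.paths v.1 n, g (Λ.srcV x)

variable {Λ}

theorem isVertex_of_deg_eq_zero {x : Λ.M} (hx : Λ.deg x = 0) : Λ.IsVertex x := by
  obtain ⟨p, -, hp⟩ := Λ.factor x 0 0 (by rw [hx, add_zero])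
  have h₁ : (Λ.rng x, x) = p :=
    hp _ ⟨Λ.src_rng x, Λ.id_comp x, Λ.deg_rng x, hx⟩
  have h₂ : (x, Λ.src x) = p :=
    hp _ ⟨(Λ.rng_src x).symm, Λ.comp_id x, hx, Λ.deg_src x⟩
  exact congrArg Prod.fst (h₁.trans h₂.symm)

theorem IsVertex.deg_eq_zero {v : Λ.M} (hv : Λ.IsVertex v) : Λ.deg v = 0 :=
  hv ▸ Λ.deg_rng v

theorem IsVertex.src_eq {v : Λ.M} (hv : Λ.IsVertex v) : Λ.src v = v := by
  rw [← hv, Λ.src_rng]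

theorem paths_zero {v : Λ.M} (hv : Λ.IsVertex v) : Λ.paths v 0 = {v} := by
  ext x
  refine ⟨fun ⟨hxv, hx⟩ => ?_, fun hx => ⟨hx ▸ hv, hx ▸ hv.deg_eq_zero⟩⟩
  rw [← hxv, isVertex_of_deg_eq_zero hx, Set.mem_singleton_iff]

theorem comp_inj {a a' b b' : Λ.M} (hab : Λ.Composable a b) (hab' : Λ.Composable a' b')
    (ha : Λ.deg a = Λ.deg a') (hb : Λ.deg b = Λ.deg b') (h : Λ.comp a b = Λ.comp a' b') :
    a = a' ∧ b = b' := by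
  obtain ⟨p, -, hp⟩ := Λ.factor (Λ.comp a b) (Λ.deg a) (Λ.deg b) (Λ.deg_comp a b hab)
  exact Prod.ext_iff.1 <|
    (hp (a, b) ⟨hab, rfl, rfl, rfl⟩).trans (hp (a', b') ⟨hab', h.symm, ha.symm, hb.symm⟩).symm

theorem paths_add (v : Λ.M) (m m' : Fin k → ℕ) :
    Λ.paths v (m + m') = ⋃ a ∈ Λ.paths v m, Λ.comp a '' Λ.paths (Λ.src a) m' := by
  ext x
  simp only [Set.mem_iUnion, Set.mem_image, exists_prop]
  constructor
  · rintro ⟨rfl, hx⟩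
    obtain ⟨⟨a, b⟩, ⟨hab, rfl, ha, hb⟩, -⟩ := Λ.factor x m m' hx
    exact ⟨a, ⟨(Λ.rng_comp a b hab).symm, ha⟩, b, ⟨hab.symm, hb⟩, rfl⟩
  · rintro ⟨a, ⟨rfl, ha⟩, b, ⟨hab, hb⟩, rfl⟩
    exact ⟨Λ.rng_comp a b hab.symm, by rw [Λ.deg_comp a b hab.symm, ha, hb]⟩

theorem pairwiseDisjoint_comp_paths (v : Λ.M) (m m' : Fin k → ℕ) :
    (Λ.paths v m).PairwiseDisjoint fun a => Λ.comp a '' Λ.paths (Λ.src a) m' := by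
  rintro a ⟨-, ha⟩ a' ⟨-, ha'⟩ hne
  refine Set.disjoint_left.2 ?_
  rintro - ⟨b, ⟨hab, hb⟩, rfl⟩ ⟨b', ⟨hab', hb'⟩, h⟩
  exact hne (comp_inj hab.symm hab'.symm (ha.trans ha'.symm) (hb.trans hb'.symm) h.symm).1

theorem injOn_comp_paths (a : Λ.M) (m : Fin k → ℕ) :
    Set.InjOn (Λ.comp a) (Λ.paths (Λ.src a) m) :=
  fun _ ⟨hab, hb⟩ _ ⟨hab', hb'⟩ h => (comp_inj hab.symm hab'.symm rfl (hb.trans hb'.symm) h).2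

theorem finite_paths_add {m m' : Fin k → ℕ} (hm : ∀ v : Λ.Vtx, (Λ.paths v.1 m).Finite)
    (hm' : ∀ v : Λ.Vtx, (Λ.paths v.1 m').Finite) (v : Λ.Vtx) :
    (Λ.paths v.1 (m + m')).Finite := by
  rw [paths_add]
  exact (hm v).biUnion fun a _ => (hm' (Λ.srcV a)).image _

theorem IsTraceAt.add {g : Λ.Vtx → ℝ≥0} {m m' : Fin k → ℕ}
    (hm : ∀ v : Λ.Vtx, (Λ.paths v.1 m).Finite) (hm' : ∀ v : Λ.Vtx, (Λ.paths v.1 m').Finite)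
    (hg : Λ.IsTraceAt g m) (hg' : Λ.IsTraceAt g m') : Λ.IsTraceAt g (m + m') := by
  intro v
  have hsrc : ∀ a, ∑ᶠ x ∈ Λ.comp a '' Λ.paths (Λ.src a) m', g (Λ.srcV x) = g (Λ.srcV a) := by
    intro a
    rw [finsum_mem_image (injOn_comp_paths a m'), hg' (Λ.srcV a)]
    exact finsum_mem_congr rfl fun b ⟨hab, _⟩ =>
      congrArg g (Subtype.ext (Λ.src_comp a b hab.symm))
  rw [paths_add, finsum_mem_biUnion (pairwiseDisjoint_comp_paths v.1 m m') (hm v)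
    fun a _ => (hm' (Λ.srcV a)).image _, hg v]
  exact finsum_mem_congr rfl fun a _ => (hsrc a).symm

theorem leSet_eq_paths (hsrc : ∀ (v : Λ.Vtx) (i : Fin k), (Λ.paths v.1 (Pi.single i 1)).Nonempty)
    (v : Λ.M) (n : Fin k → ℕ) : Λ.leSet v n = Λ.paths v n := by
  ext x
  constructor
  · rintro ⟨hxv, hle, hmax⟩
    refine ⟨hxv, le_antisymm hle fun i => ?_⟩
    by_contra! hlt
    refine hmax i (fun j => ?_) (hsrc (Λ.srcV x) i)
    rcases eq_or_ne j i with rfl | hj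
    · simpa using hlt
    · simpa [Pi.single_apply, hj] using hle j
  · rintro ⟨hxv, rfl⟩
    exact ⟨hxv, le_rfl, fun i hi => by simpa using hi i⟩

theorem isTraceAt_zero (g : Λ.Vtx → ℝ≥0) : Λ.IsTraceAt g 0 := fun v => by
  rw [paths_zero v.2, finsum_mem_singleton]
  exact congrArg g (Subtype.ext v.2.src_eq).symm

theorem isGraphTrace_iff
    (hsrc : ∀ (v : Λ.Vtx) (i : Fin k), (Λ.paths v.1 (Pi.single i 1)).Nonempty)
    (hfin : ∀ (i : Fin k) (v : Λ.Vtx), (Λ.paths v.1 (Pi.single i 1)).Finite)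
    {g : Λ.Vtx → ℝ≥0} : Λ.IsGraphTrace g ↔ ∀ i, Λ.IsTraceAt g (Pi.single i 1) := by
  have htrace : Λ.IsGraphTrace g ↔ ∀ n, Λ.IsTraceAt g n := by
    simp only [IsGraphTrace, IsTraceAt, leSet_eq_paths hsrc]
    exact forall_comm
  refine htrace.trans ⟨fun h i => h _, fun h n => ?_⟩
  refine (Pi.induction_on_single_one (p := fun n =>
    (∀ v : Λ.Vtx, (Λ.paths v.1 n).Finite) ∧ Λ.IsTraceAt g n) ?_ ?_ (fun i => ⟨hfin i, h i⟩) n).2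
  · exact ⟨fun v => paths_zero v.2 ▸ Set.finite_singleton _, isTraceAt_zero g⟩
  · exact fun m m' hm hm' =>
      ⟨finite_paths_add hm.1 hm'.1, hm.2.add hm.1 hm'.1 hm'.2⟩

end KGraph

theorem BratteliDiagram.SinglyConnected.finite_edges_to {E : BratteliDiagram}
    (hsc : E.SinglyConnected) (v : E.V) : {f | E.erng f = v}.Finite := by
  refine Set.Finite.of_finite_image ((E.level_finite (E.level v + 1)).subset ?_)
    fun f hf f' hf' h => hsc f f' (hf.trans hf'.symm) h
  rintro - ⟨f, rfl, rfl⟩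
  exact E.level_src f

theorem finite_Fdiag_edges_to {E : BratteliDiagram} (hsc : E.SinglyConnected) {w : E.V → ℕ}
    (hw : ∀ v, 0 < w v) (hdvd : ∀ f : E.Edge, w (E.erng f) ∣ w (E.esrc f)) (v : E.V) :
    {e | (Fdiag E w).erng e = v}.Finite := by
  refine (hsc.finite_edges_to v).preimage' fun f _ => ?_
  have : NeZero (w (E.esrc f) / w (E.erng f)) :=
    ⟨(Nat.div_pos (Nat.le_of_dvd (hw _) (hdvd f)) (hw _)).ne'⟩
  refine (Set.finite_range (Sigma.mk f)).subset ?_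
  rintro ⟨f, t⟩ rfl
  exact ⟨t, rfl⟩

namespace BCSLimit

open KGraph

variable {k : ℕ} {E : BratteliDiagram} {Λv : E.V → KGraph k}
  {pe : ∀ f : E.Edge, (Λv (E.esrc f)).M → (Λv (E.erng f)).M} (L : BCSLimit E Λv pe)

theorem isVertex_ι_iff (u : E.V) (y : (Λv u).M) :
    L.Lam.IsVertex (L.ι u y) ↔ (Λv u).IsVertex y := by
  rw [IsVertex, IsVertex, L.ι_rng]
  exact (L.ι_inj u).eq_iff

theorem exists_ι_eq (x : L.Lam.Vtx) : ∃ u y, L.ι u y = x.1 :=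
  L.ι_union x.1 (by rw [x.2.deg_eq_zero]; rfl)

/-- The vertex `v ∈ E⁰` with `x ∈ ι_v(Λ_v)`. -/
noncomputable def vertexLevel (x : L.Lam.Vtx) : E.V :=
  (L.exists_ι_eq x).choose

theorem vertexLevel_eq {x : L.Lam.Vtx} {u : E.V} {y : (Λv u).M} (h : L.ι u y = x.1) :
    L.vertexLevel x = u :=
  have ⟨_, hy⟩ := (L.exists_ι_eq x).choose_spec
  L.ι_disjoint _ _ _ _ (hy.trans h.symm)

theorem vertexLevel_srcV_edge {f : E.Edge} {y : (Λv (E.esrc f)).M}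
    (hy : (Λv (E.esrc f)).IsVertex y) :
    L.vertexLevel (L.Lam.srcV (L.edge ⟨f, y⟩)) = E.esrc f :=
  L.vertexLevel_eq (L.edge_src f y hy).symm

theorem vertexLevel_srcV_ι (u : E.V) (y : (Λv u).M) :
    L.vertexLevel (L.Lam.srcV (L.ι u y)) = u :=
  L.vertexLevel_eq (L.ι_src u y).symm

theorem bijOn_edge_paths (v : L.Lam.M) :
    Set.BijOn L.edge {q | (Λv (E.esrc q.1)).IsVertex q.2 ∧ L.ι (E.erng q.1) (pe q.1 q.2) = v}
      (L.Lam.paths v (Fin.snoc (fun _ : Fin k => 0) 1)) := by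
  refine ⟨fun q ⟨hq, hv⟩ => ⟨(L.edge_rng q.1 q.2 hq).trans hv, L.edge_deg q hq⟩,
    fun q ⟨hq, _⟩ q' ⟨hq', _⟩ => L.edge_injOn hq hq', ?_⟩
  rintro x ⟨rfl, hx⟩
  obtain ⟨⟨f, y⟩, hy, rfl⟩ := L.edge_surj x hx
  exact ⟨⟨f, y⟩, ⟨hy, (L.edge_rng f y hy).symm⟩, rfl⟩

end BCSLimit

theorem Delta.isVertex_iff {n : ℕ} {x : (Delta n).M} : (Delta n).IsVertex x ↔ x.1 = (0, 0) :=
  ⟨fun h => (congrArg Prod.fst h).symm, fun h => Prod.ext h.symm rfl⟩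

/-- The F-edge `(f, t)` lifts to the copy of `f` leaving the vertex `j + w(r f)·t` of
`Λ_{s f}`, which lies over the vertex `j` of `Λ_{r f}`. -/
def liftEdge {E : BratteliDiagram} {w : E.V → ℕ} (j : ℕ) (e : (Fdiag E w).Edge) :
    Σ f : E.Edge, (Delta (w (E.esrc f))).M :=
  ⟨e.1, ((0, 0), ((j + w (E.erng e.1) * e.2.val : ℕ) : ZMod (w (E.esrc e.1))))⟩

/-- The rank-3 Bratteli diagram `Λ_E`, glued from the `Δ(w v)` along the coverings `p_f`. -/
abbrev Rank3Bratteli (E : BratteliDiagram) (w : E.V → ℕ)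
    (hdvd : ∀ f : E.Edge, w (E.erng f) ∣ w (E.esrc f)) :=
  BCSLimit E (fun v => Delta (w v))
    (fun f x => (x.1, ZMod.castHom (hdvd f) (ZMod (w (E.erng f))) x.2))

namespace Rank3Bratteli

variable {E : BratteliDiagram} {w : E.V → ℕ} {hdvd : ∀ f : E.Edge, w (E.erng f) ∣ w (E.esrc f)}
  (L : Rank3Bratteli E w hdvd)

def vertex (u : E.V) (j : ZMod (w u)) : L.Lam.Vtx :=
  ⟨L.ι u ((0, 0), j), (L.isVertex_ι_iff u _).2 (Delta.isVertex_iff.2 rfl)⟩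

theorem vertexLevel_vertex (u : E.V) (j : ZMod (w u)) : L.vertexLevel (L.vertex u j) = u :=
  L.vertexLevel_eq rfl

theorem vertexLevel_surjective : Function.Surjective L.vertexLevel :=
  fun u => ⟨L.vertex u 0, L.vertexLevel_vertex u 0⟩

theorem exists_eq_vertex (x : L.Lam.Vtx) : ∃ u j, x = L.vertex u j := by
  obtain ⟨u, y, hy⟩ := L.exists_ι_eq x
  have hy0 : y.1 = (0, 0) := Delta.isVertex_iff.1 ((L.isVertex_ι_iff u y).1 (hy ▸ x.2))
  exact ⟨u, y.2, Subtype.ext (hy.symm.trans (congrArg (L.ι u) (Prod.ext hy0 rfl)))⟩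

theorem deg_ι (u : E.V) (y : (Delta (w u)).M) : L.Lam.deg (L.ι u y) = ![y.1.1, y.1.2, 0] := by
  rw [L.ι_deg]
  funext i
  fin_cases i <;> rfl

theorem paths_vertex_of_apply_two_eq_zero (u : E.V) (j : ZMod (w u)) {m : Fin 3 → ℕ}
    (hm : m 2 = 0) : L.Lam.paths (L.vertex u j).1 m = {L.ι u ((m 0, m 1), j)} := by
  ext x
  constructor
  · rintro ⟨hx, rfl⟩
    obtain ⟨u', y, rfl⟩ := L.ι_union x hm
    rw [L.ι_rng] at hx
    obtain rfl := L.ι_disjoint _ _ _ _ hx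
    have hj : y.2 = j := congrArg Prod.snd (L.ι_inj _ hx)
    rw [Set.mem_singleton_iff, deg_ι]
    exact congrArg (L.ι u') (Prod.ext rfl hj)
  · rintro rfl
    refine ⟨L.ι_rng _ _, (L.deg_ι u _).trans ?_⟩
    funext i
    fin_cases i <;> simp [hm]

theorem bijOn_liftEdge (hw : ∀ v, 0 < w v) (u : E.V) (j : ZMod (w u)) :
    Set.BijOn (liftEdge j.val) {e | (Fdiag E w).erng e = u}
      {q | (Delta (w (E.esrc q.1))).IsVertex q.2 ∧
        L.ι (E.erng q.1) (q.2.1, ZMod.castHom (hdvd q.1) _ q.2.2) = (L.vertex u j).1} := by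
  have : ∀ v, NeZero (w v) := fun v => ⟨(hw v).ne'⟩
  have hfib (f : E.Edge) := ZMod.bijOn_castHom_fiber (hdvd f)
  refine ⟨?_, ?_, ?_⟩
  · rintro ⟨f, t⟩ rfl
    exact ⟨Delta.isVertex_iff.2 rfl,
      congrArg (L.ι _) (Prod.ext rfl ((hfib f j).mapsTo (Set.mem_univ t)))⟩
  · rintro ⟨f, t⟩ rfl ⟨f', t'⟩ - h
    obtain ⟨rfl, h⟩ := Sigma.mk.inj_iff.1 h
    rw [(hfib f j).injOn (Set.mem_univ t) (Set.mem_univ t') (congrArg Prod.snd (eq_of_heq h))]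
  · rintro ⟨f, y⟩ ⟨hy, hι⟩
    obtain rfl := L.ι_disjoint _ _ _ _ hι
    obtain ⟨t, -, ht⟩ := (hfib f j).surjOn (congrArg Prod.snd (L.ι_inj _ hι))
    exact ⟨⟨f, t⟩, rfl, Sigma.ext rfl (heq_of_eq (Prod.ext (Delta.isVertex_iff.1 hy).symm ht))⟩

theorem bijOn_paths_single_two (hw : ∀ v, 0 < w v) (u : E.V) (j : ZMod (w u)) :
    Set.BijOn (L.edge ∘ liftEdge j.val) {e | (Fdiag E w).erng e = u}
      (L.Lam.paths (L.vertex u j).1 (Pi.single 2 1)) := by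
  have hsingle : (Pi.single 2 1 : Fin 3 → ℕ) = Fin.snoc (fun _ : Fin 2 => 0) 1 := by
    funext i
    fin_cases i <;> rfl
  rw [hsingle]
  exact (L.bijOn_edge_paths _).comp (L.bijOn_liftEdge hw u j)

theorem sum_paths_single_two (hw : ∀ v, 0 < w v) (h : E.V → ℝ≥0) (u : E.V) (j : ZMod (w u)) :
    ∑ᶠ x ∈ L.Lam.paths (L.vertex u j).1 (Pi.single 2 1), (h ∘ L.vertexLevel) (L.Lam.srcV x) =
      ∑ᶠ e ∈ {e | (Fdiag E w).erng e = u}, h ((Fdiag E w).esrc e) :=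
  (finsum_mem_eq_of_bijOn _ (L.bijOn_paths_single_two hw u j) fun _ _ =>
    congrArg h (L.vertexLevel_srcV_edge (Delta.isVertex_iff.2 rfl)).symm).symm

theorem single_apply_two_eq_zero_or (i : Fin 3) : (Pi.single i 1 : Fin 3 → ℕ) 2 = 0 ∨ i = 2 := by
  fin_cases i <;> simp

theorem paths_single_nonempty (hw : ∀ v, 0 < w v) (x : L.Lam.Vtx) (i : Fin 3) :
    (L.Lam.paths x.1 (Pi.single i 1)).Nonempty := by
  obtain ⟨u, j, rfl⟩ := L.exists_eq_vertex x
  rcases single_apply_two_eq_zero_or i with hi | rfl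
  · exact L.paths_vertex_of_apply_two_eq_zero _ j hi ▸ Set.singleton_nonempty _
  · obtain ⟨e, he⟩ := (Fdiag E w).rcv u
    exact ⟨_, (L.bijOn_paths_single_two hw _ j).mapsTo he⟩

theorem paths_single_finite (hsc : E.SinglyConnected) (hw : ∀ v, 0 < w v) (i : Fin 3)
    (x : L.Lam.Vtx) : (L.Lam.paths x.1 (Pi.single i 1)).Finite := by
  obtain ⟨u, j, rfl⟩ := L.exists_eq_vertex x
  rcases single_apply_two_eq_zero_or i with hi | rfl
  · exact L.paths_vertex_of_apply_two_eq_zero _ j hi ▸ Set.finite_singleton _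
  · exact (L.bijOn_paths_single_two hw _ j).image_eq ▸
      (finite_Fdiag_edges_to hsc hw hdvd _).image _

theorem isGraphTrace_iff (hsc : E.SinglyConnected) (hw : ∀ v, 0 < w v)
    {g : L.Lam.Vtx → ℝ≥0} : L.Lam.IsGraphTrace g ↔ ∀ i, L.Lam.IsTraceAt g (Pi.single i 1) :=
  KGraph.isGraphTrace_iff (L.paths_single_nonempty hw) (L.paths_single_finite hsc hw)

theorem isTraceAt_comp_vertexLevel_of_apply_two_eq_zero (h : E.V → ℝ≥0) {m : Fin 3 → ℕ}
    (hm : m 2 = 0) : L.Lam.IsTraceAt (h ∘ L.vertexLevel) m := by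
  intro x
  obtain ⟨u, j, rfl⟩ := L.exists_eq_vertex x
  rw [L.paths_vertex_of_apply_two_eq_zero u j hm, finsum_mem_singleton, Function.comp_apply,
    Function.comp_apply, vertexLevel_vertex]
  exact congrArg h (L.vertexLevel_srcV_ι u _).symm

theorem isTraceAt_single_two_comp_vertexLevel_iff (hw : ∀ v, 0 < w v) (h : E.V → ℝ≥0) :
    L.Lam.IsTraceAt (h ∘ L.vertexLevel) (Pi.single 2 1) ↔ (Fdiag E w).IsTrace h := by
  constructor
  · intro hg u
    exact (congrArg h (L.vertexLevel_vertex u 0)).symm.trans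
      ((hg (L.vertex u 0)).trans (L.sum_paths_single_two hw h u 0))
  · intro hh x
    obtain ⟨u, j, rfl⟩ := L.exists_eq_vertex x
    exact (congrArg h (L.vertexLevel_vertex u j)).trans
      ((hh u).trans (L.sum_paths_single_two hw h u j).symm)

theorem isGraphTrace_comp_vertexLevel_iff (hsc : E.SinglyConnected) (hw : ∀ v, 0 < w v)
    (h : E.V → ℝ≥0) : L.Lam.IsGraphTrace (h ∘ L.vertexLevel) ↔ (Fdiag E w).IsTrace h := by
  rw [L.isGraphTrace_iff hsc hw, ← L.isTraceAt_single_two_comp_vertexLevel_iff hw]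
  refine ⟨fun hg => hg 2, fun hg i => ?_⟩
  rcases single_apply_two_eq_zero_or i with hi | rfl
  · exact L.isTraceAt_comp_vertexLevel_of_apply_two_eq_zero h hi
  · exact hg

theorem apply_vertex_add_one {g : L.Lam.Vtx → ℝ≥0} (hg : L.Lam.IsTraceAt g (Pi.single 0 1))
    (u : E.V) (j : ZMod (w u)) : g (L.vertex u (j + 1)) = g (L.vertex u j) := by
  rw [hg (L.vertex u j), L.paths_vertex_of_apply_two_eq_zero u j (by simp), finsum_mem_singleton]
  refine congrArg g (Subtype.ext ?_)
  refine Eq.trans ?_ (L.ι_src u _).symm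
  simp [vertex, Delta]

theorem apply_vertex_eq_apply_vertex_zero (hw : ∀ v, 0 < w v) {g : L.Lam.Vtx → ℝ≥0}
    (hg : L.Lam.IsTraceAt g (Pi.single 0 1)) (u : E.V) (j : ZMod (w u)) :
    g (L.vertex u j) = g (L.vertex u 0) := by
  have : NeZero (w u) := ⟨(hw u).ne'⟩
  rw [← ZMod.natCast_zmod_val j]
  induction j.val with
  | zero => rw [Nat.cast_zero]
  | succ n ih => rw [Nat.cast_succ, L.apply_vertex_add_one hg, ih]

theorem exists_eq_comp_vertexLevel (hw : ∀ v, 0 < w v) {g : L.Lam.Vtx → ℝ≥0}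
    (hg : L.Lam.IsTraceAt g (Pi.single 0 1)) : ∃ h, g = h ∘ L.vertexLevel :=
  ⟨fun u => g (L.vertex u 0), funext fun x => by
    obtain ⟨u, j, rfl⟩ := L.exists_eq_vertex x
    rw [Function.comp_apply, vertexLevel_vertex, L.apply_vertex_eq_apply_vertex_zero hw hg]⟩

end Rank3Bratteli

open KGraph in
/-- For the rank-3 Bratteli diagram `Λ = Λ_E` of a singly connected
weighted Bratteli diagram `(E, w)`, graph traces on the Bratteli diagram `F` are in
bijection `h ↦ g_h` with graph traces on `Λ`, where `g_h(ι_v(v,j)) = h v`. -/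
theorem rank3_traces_biject_with_F_traces
    (E : BratteliDiagram) (hsc : E.SinglyConnected)
    (w : E.V → ℕ) (hw : ∀ v, 0 < w v)
    (hdvd : ∀ f : E.Edge, w (E.erng f) ∣ w (E.esrc f))
    (L : BCSLimit E (fun v => Delta (w v))
      (fun f x => (x.1, ZMod.castHom (hdvd f) (ZMod (w (E.erng f))) x.2))) :
    ∃ Φ : {h : E.V → ℝ≥0 // (Fdiag E w).IsTrace h} →
        {g : L.Lam.Vtx → ℝ≥0 // L.Lam.IsGraphTrace g},
      Function.Bijective Φ ∧
      ∀ (h : {h : E.V → ℝ≥0 // (Fdiag E w).IsTrace h}) (v : E.V) (j : ZMod (w v))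
        (x : L.Lam.Vtx), x.1 = L.ι v ((0, 0), j) → (Φ h).1 x = h.1 v := by
  have htrace := Rank3Bratteli.isGraphTrace_comp_vertexLevel_iff L hsc hw
  refine ⟨fun h => ⟨h.1 ∘ L.vertexLevel, (htrace h.1).2 h.2⟩, ⟨fun h h' hΦ => ?_, fun g => ?_⟩,
    fun h v j x hx => congrArg h.1 (L.vertexLevel_eq hx.symm)⟩
  · exact Subtype.ext ((Rank3Bratteli.vertexLevel_surjective L).injective_comp_right
      (congrArg Subtype.val hΦ))
  · obtain ⟨h, hgh⟩ := Rank3Bratteli.exists_eq_comp_vertexLevel L hw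
      ((Rank3Bratteli.isGraphTrace_iff L hsc hw).1 g.2 0)
    exact ⟨⟨h, (htrace h).1 (hgh ▸ g.2)⟩, Subtype.ext hgh.symm⟩
end

section
/- Let Λ be a row-finite locally convex k-graph, let c be a 𝕋-valued 2-cocycle on Λ, let s be a Cuntz–Krieger (Λ,c)-family in a C*-algebra B, and let τ be a semifinite trace on B. Then τ(s_v) < ∞ for every v ∈ Λ^0, and the function g : Λ^0 → [0,∞) defined by g(v) = τ(s_v) is a graph trace on Λ. -/
open scoped BigOperators NNReal ENNReal

/-!
A vertex projection `p = s_v` has finite trace because semifiniteness gives a positive `b`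
with `τ b < ∞` and `‖b - p‖ ≤ 1/2`; then `p ≤ 2 pbp` in the corner `pBp`, and
`τ (pbp) ≤ τ b` by the trace property. The graph-trace identity is (CK4) pushed through `τ`,
using `τ (s_λ s_λ*) = τ (s_λ* s_λ) = τ (s_{s(λ)})` by (CK3).
-/

section Projection

variable {B : Type*} [NonUnitalCStarAlgebra B] [PartialOrder B] [StarOrderedRing B]

/-- In the unitization this is `p (1 + y) p ≥ 0`, as `1 + y ≥ 1 - ‖y‖ ≥ 0`. -/
lemma IsStarProjection.add_conjugate_nonneg {p y : B} (hp : IsStarProjection p)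
    (hy : IsSelfAdjoint y) (hy1 : ‖y‖ ≤ 1) : 0 ≤ p + p * y * p := by
  rw [← Unitization.inr_nonneg_iff]
  set P : Unitization ℂ B := (p : Unitization ℂ B)
  set Y : Unitization ℂ B := (y : Unitization ℂ B)
  have hYsa : IsSelfAdjoint Y := Unitization.isSelfAdjoint_inr.mpr hy
  have hY : 0 ≤ 1 + Y := by
    have hnorm : algebraMap ℝ (Unitization ℂ B) ‖Y‖ ≤ 1 := by
      simpa using algebraMap_mono (Unitization ℂ B) (show ‖Y‖ ≤ 1 by rwa [Unitization.norm_inr])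
    rw [← neg_le_iff_add_nonneg']
    exact (neg_le_neg hnorm).trans hYsa.neg_algebraMap_norm_le_self
  have hP : IsStarProjection P := hp.map (Unitization.inrNonUnitalStarAlgHom ℂ B)
  have key : (↑(p + p * y * p) : Unitization ℂ B) = star P * (1 + Y) * P := by
    rw [hP.isSelfAdjoint.star_eq, mul_add, mul_one, add_mul, hP.isIdempotentElem.eq]
    push_cast
    rfl
  rw [key]
  exact star_left_conjugate_nonneg hY P

lemma IsStarProjection.le_conjugate_add_conjugate {p b : B} (hp : IsStarProjection p)
    (hb : IsSelfAdjoint b) (hbp : ‖b - p‖ ≤ 2⁻¹) : p ≤ p * b * p + p * b * p := by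
  have hx : IsSelfAdjoint (b - p) := hb.sub hp.isSelfAdjoint
  have hnorm : ‖(b - p) + (b - p)‖ ≤ 1 := (norm_add_le _ _).trans (by linarith)
  have hpos := hp.add_conjugate_nonneg (hx.add hx) hnorm
  have hppp : p * p * p = p := by rw [hp.isIdempotentElem.eq, hp.isIdempotentElem.eq]
  rw [← sub_nonneg]
  convert hpos using 1
  simp only [mul_add, add_mul, mul_sub, sub_mul, hppp]
  abel

end Projection

section Trace

def AdditiveOnNonneg {B : Type*} [Add B] [Zero B] [LE B] (τ : B → ℝ≥0∞) : Prop :=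
  ∀ a b : B, 0 ≤ a → 0 ≤ b → τ (a + b) = τ a + τ b

namespace AdditiveOnNonneg

lemma map_zero {B : Type*} [AddZeroClass B] [Preorder B] {τ : B → ℝ≥0∞}
    (hτ : AdditiveOnNonneg τ) {b : B} (hb : 0 ≤ b) (hτb : τ b ≠ ∞) : τ 0 = 0 := by
  have h : τ 0 + τ b = 0 + τ b := by rw [← hτ 0 b le_rfl hb, zero_add, zero_add]
  exact (ENNReal.add_left_inj hτb).mp h

variable {B : Type*} [AddCommGroup B] [PartialOrder B] [IsOrderedAddMonoid B] {τ : B → ℝ≥0∞}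

lemma mono (hτ : AdditiveOnNonneg τ) {a b : B} (ha : 0 ≤ a) (hab : a ≤ b) : τ a ≤ τ b := by
  calc τ a ≤ τ a + τ (b - a) := le_self_add
    _ = τ b := by rw [← hτ a (b - a) ha (sub_nonneg.mpr hab), add_sub_cancel]

lemma map_sum (hτ : AdditiveOnNonneg τ) (hτ0 : τ 0 = 0) {ι : Type*} (F : Finset ι)
    {f : ι → B} (hf : ∀ i ∈ F, 0 ≤ f i) : τ (∑ i ∈ F, f i) = ∑ i ∈ F, τ (f i) := by
  induction F using Finset.cons_induction with
  | empty => simpa using hτ0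
  | cons i F hi ih =>
    rw [Finset.forall_mem_cons] at hf
    rw [Finset.sum_cons, Finset.sum_cons, hτ _ _ hf.1 (Finset.sum_nonneg hf.2), ih hf.2]

lemma map_finsum_mem (hτ : AdditiveOnNonneg τ) (hτ0 : τ 0 = 0) {ι : Type*} {S : Set ι}
    (hS : S.Finite) {f : ι → B} (hf : ∀ i ∈ S, 0 ≤ f i) :
    τ (∑ᶠ i ∈ S, f i) = ∑ᶠ i ∈ S, τ (f i) := by
  rw [finsum_mem_eq_finite_toFinset_sum _ hS, finsum_mem_eq_finite_toFinset_sum _ hS]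
  exact hτ.map_sum hτ0 _ fun i hi => hf i (hS.mem_toFinset.mp hi)

end AdditiveOnNonneg

variable {B : Type*} [NonUnitalCStarAlgebra B] [PartialOrder B] [StarOrderedRing B]
  {τ : B → ℝ≥0∞}

lemma AdditiveOnNonneg.map_conjugate_le (hτ : AdditiveOnNonneg τ)
    (htrace : ∀ a : B, τ (star a * a) = τ (a * star a)) {p b : B} (hp : IsStarProjection p)
    (hb : 0 ≤ b) : τ (p * b * p) ≤ τ b := by
  set q := CFC.sqrt b
  have hq : IsSelfAdjoint q := .of_nonneg (CFC.sqrt_nonneg b)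
  have hqq : q * q = b := CFC.sqrt_mul_sqrt_self b hb
  have hps := hp.isSelfAdjoint.star_eq
  have hqpq : star (p * q) * (p * q) = q * p * q := by
    rw [star_mul, hq.star_eq, hps, mul_assoc, ← mul_assoc p p q, hp.isIdempotentElem.eq, mul_assoc]
  have hle : q * p * q ≤ b := by
    rw [← sub_nonneg]
    have h : b - q * p * q = star (q - p * q) * (q - p * q) := by
      rw [star_sub, sub_mul, mul_sub, mul_sub, hqpq, star_mul, hq.star_eq, hps, hqq]
      noncomm_ring
    exact h ▸ star_mul_self_nonneg _
  calc τ (p * b * p) = τ (star (q * p) * (q * p)) := by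
        rw [star_mul, hq.star_eq, hps, ← hqq]; noncomm_ring
    _ = τ (star (p * q) * (p * q)) := by rw [htrace]; simp only [star_mul, hq.star_eq, hps]
    _ ≤ τ b := hqpq ▸ hτ.mono (hqpq ▸ star_mul_self_nonneg _) hle

lemma AdditiveOnNonneg.map_ne_top_of_isStarProjection (hτ : AdditiveOnNonneg τ)
    (htrace : ∀ a : B, τ (star a * a) = τ (a * star a)) {p : B} (hp : IsStarProjection p)
    (hsemi : p ∈ closure {b : B | 0 ≤ b ∧ τ b ≠ ∞}) : τ p ≠ ∞ := by
  obtain ⟨b, ⟨hb, hτb⟩, hpb⟩ := Metric.mem_closure_iff.mp hsemi 2⁻¹ (by norm_num)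
  have hbp : ‖b - p‖ ≤ 2⁻¹ := by rw [← dist_eq_norm, dist_comm]; exact hpb.le
  have hpbp : 0 ≤ p * b * p := by
    simpa [hp.isSelfAdjoint.star_eq] using star_left_conjugate_nonneg hb p
  have hτpbp := hτ.map_conjugate_le htrace hp hb
  refine ne_top_of_le_ne_top (ENNReal.add_ne_top.mpr ⟨hτb, hτb⟩) ?_
  calc τ p ≤ τ (p * b * p + p * b * p) :=
        hτ.mono hp.nonneg (hp.le_conjugate_add_conjugate (.of_nonneg hb) hbp)
    _ = τ (p * b * p) + τ (p * b * p) := hτ _ _ hpbp hpbp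
    _ ≤ τ b + τ b := by gcongr

end Trace

namespace KGraph

variable {k : ℕ} {Λ : KGraph k}

lemma leSet_finite (hrf : Λ.RowFinite) {v : Λ.M} (hv : Λ.IsVertex v) (n : Fin k → ℕ) :
    (Λ.leSet v n).Finite :=
  ((Set.finite_Iic n).biUnion fun m _ => hrf v m hv).subset
    fun _ hx => Set.mem_biUnion hx.2.1 ⟨hx.1, rfl⟩

lemma isGraphTrace_toNNReal (hrf : Λ.RowFinite) {g : Λ.Vtx → ℝ≥0∞} (hg : ∀ v, g v ≠ ∞)
    (hsum : ∀ v n, g v = ∑ᶠ x ∈ Λ.leSet v.1 n, g (Λ.srcV x)) :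
    Λ.IsGraphTrace fun v => (g v).toNNReal := by
  intro v n
  have hF := leSet_finite hrf v.2 n
  show (g v).toNNReal = ∑ᶠ x ∈ Λ.leSet v.1 n, (g (Λ.srcV x)).toNNReal
  rw [hsum v n, finsum_mem_eq_finite_toFinset_sum _ hF, finsum_mem_eq_finite_toFinset_sum _ hF]
  exact ENNReal.toNNReal_sum fun x _ => hg _

variable {B : Type*} [NonUnitalCStarAlgebra B] [NormedSpace ℂ B] {c : Λ.M → Λ.M → ℂ}
  {s : Λ.M → B}

lemma IsCKFamily.isStarProjection (hs : Λ.IsCKFamily c s) {v : Λ.M} (hv : Λ.IsVertex v) :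
    IsStarProjection (s v) :=
  isStarProjection_iff'.mpr ⟨(hs.1 v hv).2, (hs.1 v hv).1⟩

lemma IsCKFamily.map_vertex_eq_finsum [PartialOrder B] [StarOrderedRing B]
    (hrf : Λ.RowFinite) (hs : Λ.IsCKFamily c s)
    {τ : B → ℝ≥0∞} (hτ : AdditiveOnNonneg τ) (hτ0 : τ 0 = 0)
    (htrace : ∀ a : B, τ (star a * a) = τ (a * star a)) {v : Λ.M} (hv : Λ.IsVertex v)
    (n : Fin k → ℕ) : τ (s v) = ∑ᶠ x ∈ Λ.leSet v n, τ (s (Λ.src x)) := by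
  rw [hs.2.2.2.2 v n hv,
    hτ.map_finsum_mem hτ0 (leSet_finite hrf hv n) fun x _ => mul_star_self_nonneg (s x)]
  exact finsum_mem_congr rfl fun x _ => by rw [← htrace, hs.2.2.2.1]

end KGraph

open KGraph in
theorem graphTrace_of_semifinite_trace_general {k : ℕ} (Λ : KGraph k)
    (hrf : Λ.RowFinite)
    (c : Λ.M → Λ.M → ℂ)
    {B : Type*} [NonUnitalCStarAlgebra B] [NormedSpace ℂ B]
    [PartialOrder B] [StarOrderedRing B]
    (s : Λ.M → B) (hs : Λ.IsCKFamily c s)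
    (τ : B → ℝ≥0∞)
    (hadd : ∀ a b : B, 0 ≤ a → 0 ≤ b → τ (a + b) = τ a + τ b)
    (htrace : ∀ a : B, τ (star a * a) = τ (a * star a))
    (hsemifinite : ∀ a : B, 0 ≤ a → a ∈ closure {b : B | 0 ≤ b ∧ τ b ≠ ∞}) :
    (∀ v : Λ.Vtx, τ (s v.1) ≠ ∞) ∧
      Λ.IsGraphTrace (fun v : Λ.Vtx => (τ (s v.1)).toNNReal) := by
  have hτ : AdditiveOnNonneg τ := hadd
  have hproj (v : Λ.Vtx) : IsStarProjection (s v.1) := hs.isStarProjection v.2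
  have hfin (v : Λ.Vtx) : τ (s v.1) ≠ ∞ :=
    hτ.map_ne_top_of_isStarProjection htrace (hproj v) (hsemifinite _ (hproj v).nonneg)
  refine ⟨hfin, isGraphTrace_toNNReal hrf hfin fun v n => ?_⟩
  exact hs.map_vertex_eq_finsum hrf hτ (hτ.map_zero (hproj v).nonneg (hfin v)) htrace v.2 n

open KGraph in
/-- If `s` is a Cuntz–Krieger `(Λ,c)`-family in a `C*`-algebra `B`
and `τ` is a semifinite trace on `B`, then `τ(s_v) < ∞` for every vertex `v`, and
`v ↦ τ(s_v)` is a graph trace on `Λ`. -/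
theorem graphTrace_of_semifinite_trace {k : ℕ} (Λ : KGraph k)
    (hrf : Λ.RowFinite) (hlc : Λ.LocallyConvex)
    (c : Λ.M → Λ.M → ℂ) (hc : Λ.IsTCocycle c)
    {B : Type*} [NonUnitalCStarAlgebra B] [NormedSpace ℂ B]
    [PartialOrder B] [StarOrderedRing B]
    (s : Λ.M → B) (hs : Λ.IsCKFamily c s)
    (τ : B → ℝ≥0∞)
    (hadd : ∀ a b : B, 0 ≤ a → 0 ≤ b → τ (a + b) = τ a + τ b)
    (hsmul : ∀ (r : ℝ≥0) (a : B), 0 ≤ a → τ (((r : ℝ) : ℂ) • a) = r * τ a)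
    (htrace : ∀ a : B, τ (star a * a) = τ (a * star a))
    (hsemifinite : ∀ a : B, 0 ≤ a → a ∈ closure {b : B | 0 ≤ b ∧ τ b ≠ ∞}) :
    (∀ v : Λ.Vtx, τ (s v.1) ≠ ∞) ∧
      Λ.IsGraphTrace (fun v : Λ.Vtx => (τ (s v.1)).toNNReal) :=
  graphTrace_of_semifinite_trace_general Λ hrf c s hs τ hadd htrace hsemifinite
end
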